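/- Assume s_c ∈ (s₀, ∞) satisfies ∫₀¹ (s_c² − 2Ω(p))^{-3/2} dp = 1, that R₀ = lim_{s→s₀+} R(s) is finite, and let r ≥ R₀; let s₊(r) be the unique solution of R(s) = r in (s_c, ∞). Then s ↦ σ(s;r) is strictly decreasing on (s₀, s₊(r)) and strictly increasing on (s₊(r), ∞), and σ(s;r) → +∞ as s → ∞. -/

import Mathlib

open MeasureTheory Set Filter

noncomputable section

/-- `Omeg ω p = ∫₀^p ω(t) dt`, the primitive of the vorticity function. -/
def Omeg (ω : ℝ → ℝ) (p : ℝ) : ℝ := ∫ t in (0:ℝ)..p, ω t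

/-- `s0 ω = sqrt (max_{p ∈ [0,1]} 2 Ω(p))`. -/
def s0 (ω : ℝ → ℝ) : ℝ := Real.sqrt (sSup ((fun p => 2 * Omeg ω p) '' Icc (0:ℝ) 1))

/-- `Hp ω p s = (s² − 2Ω(p))^{-1/2}`. -/
def Hp (ω : ℝ → ℝ) (p s : ℝ) : ℝ := (Real.sqrt (s ^ 2 - 2 * Omeg ω p))⁻¹

/-- `Hfun ω p s = H(p; s) = ∫₀^p (s² − 2Ω(τ))^{-1/2} dτ`. -/
def Hfun (ω : ℝ → ℝ) (p s : ℝ) : ℝ := ∫ τ in (0:ℝ)..p, Hp ω τ s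

/-- `dd ω s = d(s) = H(1; s)`. -/
def dd (ω : ℝ → ℝ) (s : ℝ) : ℝ := Hfun ω 1 s

/-- `RR ω s = R(s) = s²/2 − Ω(1) + d(s)`, the Bernoulli constant of the stream solution. -/
def RR (ω : ℝ → ℝ) (s : ℝ) : ℝ := s ^ 2 / 2 - Omeg ω 1 + dd ω s

/-- `sigmaFun ω s r = σ(s; r)`. -/
def sigmaFun (ω : ℝ → ℝ) (s r : ℝ) : ℝ :=
  ∫ p in (0:ℝ)..1,
    (1 / (2 * (Hp ω p s) ^ 2) - Hfun ω p s - Omeg ω p + Omeg ω 1 + r) * Hp ω p s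

/-- Partial derivative in the first (horizontal) variable `q`. -/
def dq (f : ℝ → ℝ → ℝ) (q p : ℝ) : ℝ := deriv (fun x => f x p) q

/-- Partial derivative in the second (vertical) variable `p`. -/
def dp (f : ℝ → ℝ → ℝ) (q p : ℝ) : ℝ := deriv (fun y => f q y) p

/-- The height system with Bernoulli constant `r` on the strip `S = ℝ × [0,1]`. -/
structure HeightSol (ω : ℝ → ℝ) (r : ℝ) (h : ℝ → ℝ → ℝ) : Prop where
  smooth : ContDiff ℝ 2 (Function.uncurry h)
  hp_pos : ∀ q : ℝ, ∀ p ∈ Icc (0:ℝ) 1, 0 < dp h q p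
  pde : ∀ q : ℝ, ∀ p ∈ Icc (0:ℝ) 1,
    (1 + (dq h q p) ^ 2) / (dp h q p) ^ 2 * dp (dp h) q p
      - 2 * (dq h q p) / (dp h q p) * dp (dq h) q p
      + dq (dq h) q p - ω p * dp h q p = 0
  top : ∀ q : ℝ, (1 + (dq h q 1) ^ 2) / (2 * (dp h q 1) ^ 2) + h q 1 = r
  bot : ∀ q : ℝ, h q 0 = 0

/-- The flow force of a height function `h`, computed on the vertical line through `q`. -/
def flowForce (ω : ℝ → ℝ) (r : ℝ) (h : ℝ → ℝ → ℝ) (q : ℝ) : ℝ :=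
  ∫ p in (0:ℝ)..1,
    ((1 - (dq h q p) ^ 2) / (2 * (dp h q p) ^ 2) - h q p - Omeg ω p + Omeg ω 1 + r) * dp h q p

/-- `wfun ω s h = w^{(s)} = h − H(·; s)`. -/
def wfun (ω : ℝ → ℝ) (s : ℝ) (h : ℝ → ℝ → ℝ) (q p : ℝ) : ℝ := h q p - Hfun ω p s

/-- The flow force flux function `Φ^{(s)}`. -/
def Phi (ω : ℝ → ℝ) (s : ℝ) (h : ℝ → ℝ → ℝ) (q p : ℝ) : ℝ :=
  ∫ p' in (0:ℝ)..p,
    ((dp (wfun ω s h) q p') ^ 2 / (dp h q p' * (Hp ω p' s) ^ 2)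
      - (dq (wfun ω s h) q p') ^ 2 / dp h q p')

/-- `h ∈ C^{2,γ}(S̄)`: `h` is twice continuously differentiable, all partial derivatives of
order ≤ 2 are bounded on the strip, and the second-order derivatives are uniformly
γ-Hölder continuous on the strip. -/
def C2Holder (γ : ℝ) (h : ℝ → ℝ → ℝ) : Prop :=
  ContDiff ℝ 2 (Function.uncurry h) ∧
  (∀ g ∈ ([h, dq h, dp h, dq (dq h), dp (dq h), dp (dp h)] : List (ℝ → ℝ → ℝ)),
    ∃ M : ℝ, ∀ q : ℝ, ∀ p ∈ Icc (0:ℝ) 1, |g q p| ≤ M) ∧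
  (∀ g ∈ ([dq (dq h), dp (dq h), dp (dp h)] : List (ℝ → ℝ → ℝ)),
    ∃ C : ℝ, ∀ q q' : ℝ, ∀ p ∈ Icc (0:ℝ) 1, ∀ p' ∈ Icc (0:ℝ) 1,
      |g q p - g q' p'| ≤ C * Real.sqrt ((q - q') ^ 2 + (p - p') ^ 2) ^ γ)

end

/-! Writing `X = s² − 2Ω`, the integrand of `σ(s;r)` is `√X − H·H_p + (Ω(1) + r − s²/2)·H_p`, and
`∫ H·H_p = d²/2`, so `σ = A − d²/2 + (Ω(1) + r − s²/2)·d` with `A(s) = ∫₀¹ √X`. Differentiating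
under the integral sign, `A' = s·d` and `d' = −s·I` with `I(s) = ∫₀¹ H_p³`, hence
`∂σ/∂s = s·I·(R − r)` and `R' = s·(1 − I)`. Since `I` is strictly decreasing with `I(s_c) = 1`,
`R` decreases on `(s₀, s_c]` (staying below its limit `R₀ ≤ r`) and increases on `[s_c, ∞)`
through the value `r` at `s₊`, which gives the sign of `∂σ/∂s`. Finally, with
`t = √(s² − s₀²)` one has `A ≥ t` and `d ≤ 1/t`, so `σ ≥ t/2 − C`. -/

open Metric

theorem hasDerivAt_intervalIntegral_of_continuousOn {F F' : ℝ → ℝ → ℝ} {x₀ ε a b : ℝ}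
    (hab : a ≤ b) (hε : 0 < ε)
    (hF : ∀ x ∈ ball x₀ ε, ContinuousOn (F x) (Icc a b))
    (hF' : ContinuousOn (Function.uncurry F') (closedBall x₀ ε ×ˢ Icc a b))
    (hderiv : ∀ x ∈ ball x₀ ε, ∀ t ∈ Icc a b, HasDerivAt (F · t) (F' x t) x) :
    HasDerivAt (fun x => ∫ t in a..b, F x t) (∫ t in a..b, F' x₀ t) x₀ := by
  obtain ⟨K, hK⟩ :=
    ((isCompact_closedBall x₀ ε).prod isCompact_Icc).exists_bound_of_continuousOn hF'
  have hF'₀ : ContinuousOn (F' x₀) (Icc a b) :=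
    hF'.comp (continuous_const.prodMk continuous_id).continuousOn
      fun t ht => ⟨mem_closedBall_self hε.le, ht⟩
  have hIoc : uIoc a b ⊆ Icc a b := by rw [uIoc_of_le hab]; exact Ioc_subset_Icc_self
  refine (intervalIntegral.hasDerivAt_integral_of_dominated_loc_of_deriv_le (bound := fun _ => K)
    (ball_mem_nhds x₀ hε) ?_ ?_ ?_ ?_ intervalIntegrable_const ?_).2
  · filter_upwards [ball_mem_nhds x₀ hε] with x hx
    exact ((hF x hx).mono hIoc).aestronglyMeasurable measurableSet_uIoc
  · exact (hF x₀ (mem_ball_self hε)).intervalIntegrable_of_Icc hab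
  · exact (hF'₀.mono hIoc).aestronglyMeasurable measurableSet_uIoc
  · exact Eventually.of_forall fun t ht x hx =>
      hK (x, t) ⟨ball_subset_closedBall hx, hIoc ht⟩
  · exact Eventually.of_forall fun t ht x hx => hderiv x hx t (hIoc ht)

theorem hasDerivAt_intervalIntegral_comp_sub {g g' c : ℝ → ℝ} {u₀ a b : ℝ} (hab : a ≤ b)
    (hg : ∀ y ∈ Ioi (0:ℝ), HasDerivAt g (g' y) y) (hg' : ContinuousOn g' (Ioi 0))
    (hc : Continuous c) (hu₀ : ∀ t ∈ Icc a b, c t < u₀) :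
    HasDerivAt (fun u => ∫ t in a..b, g (u - c t)) (∫ t in a..b, g' (u₀ - c t)) u₀ := by
  obtain ⟨t₀, ht₀, hmax⟩ := isCompact_Icc.exists_isMaxOn (nonempty_Icc.2 hab) hc.continuousOn
  have hε : 0 < (u₀ - c t₀) / 2 := by linarith [hu₀ t₀ ht₀]
  have hpos : ∀ u ∈ closedBall u₀ ((u₀ - c t₀) / 2), ∀ t ∈ Icc a b, 0 < u - c t := by
    intro u hu t ht
    rw [mem_closedBall, Real.dist_eq, abs_le] at hu
    linarith [isMaxOn_iff.1 hmax t ht, hu₀ t₀ ht₀]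
  refine hasDerivAt_intervalIntegral_of_continuousOn (F := fun u t => g (u - c t))
    (F' := fun u t => g' (u - c t)) hab hε (fun u hu t ht => ?_) ?_ (fun u hu t ht => ?_)
  · exact ((hg _ (hpos u (ball_subset_closedBall hu) t ht)).continuousAt.comp
      (f := fun t => u - c t) (by fun_prop)).continuousWithinAt
  · exact hg'.comp (by fun_prop : Continuous fun z : ℝ × ℝ => z.1 - c z.2).continuousOn
      fun z hz => hpos z.1 hz.1 z.2 hz.2
  · exact (hg _ (hpos u (ball_subset_closedBall hu) t ht)).comp_sub_const u (c t)

theorem StrictAntiOn.lt_of_tendsto_nhdsGT {f : ℝ → ℝ} {a b L x : ℝ}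
    (hf : StrictAntiOn f (Ioc a b)) (hL : Tendsto f (nhdsWithin a (Ioi a)) (nhds L))
    (hx : x ∈ Ioc a b) : f x < L := by
  have hu : (a + x) / 2 ∈ Ioo a x := ⟨by linarith [hx.1], by linarith [hx.1]⟩
  have hxu : f x < f ((a + x) / 2) := hf ⟨hu.1, hu.2.le.trans hx.2⟩ hx hu.2
  refine hxu.trans_le (ge_of_tendsto hL ?_)
  filter_upwards [Ioo_mem_nhdsGT hu.1] with v hv
  exact (hf ⟨hv.1, hv.2.le.trans (hu.2.le.trans hx.2)⟩ ⟨hu.1, hu.2.le.trans hx.2⟩ hv.2).le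

noncomputable def Afun (ω : ℝ → ℝ) (s : ℝ) : ℝ := ∫ p in (0:ℝ)..1, Real.sqrt (s ^ 2 - 2 * Omeg ω p)

noncomputable def Ifun (ω : ℝ → ℝ) (s : ℝ) : ℝ := ∫ p in (0:ℝ)..1, Hp ω p s ^ 3

section Profile

variable {ω : ℝ → ℝ}

theorem Omeg_hasDerivAt (hω : Continuous ω) (p : ℝ) : HasDerivAt (Omeg ω) (ω p) p :=
  intervalIntegral.integral_hasDerivAt_right (hω.intervalIntegrable _ _)
    (hω.stronglyMeasurableAtFilter _ _) hω.continuousAt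

theorem continuous_Omeg (hω : Continuous ω) : Continuous (Omeg ω) :=
  continuous_iff_continuousAt.2 fun p => (Omeg_hasDerivAt hω p).continuousAt

theorem two_mul_Omeg_le_s0_sq (hω : Continuous ω) {p : ℝ} (hp : p ∈ Icc (0:ℝ) 1) :
    2 * Omeg ω p ≤ s0 ω ^ 2 := by
  have hbdd : BddAbove ((fun p => 2 * Omeg ω p) '' Icc (0:ℝ) 1) :=
    (isCompact_Icc.image (continuous_const.mul (continuous_Omeg hω))).bddAbove
  have hsup : 0 ≤ sSup ((fun p => 2 * Omeg ω p) '' Icc (0:ℝ) 1) :=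
    le_csSup_of_le hbdd (mem_image_of_mem _ (left_mem_Icc.2 zero_le_one))
      (by simp [Omeg])
  rw [s0, Real.sq_sqrt hsup]
  exact le_csSup hbdd (mem_image_of_mem _ hp)

theorem sq_sub_s0_sq_le (hω : Continuous ω) (s : ℝ) {p : ℝ} (hp : p ∈ Icc (0:ℝ) 1) :
    s ^ 2 - s0 ω ^ 2 ≤ s ^ 2 - 2 * Omeg ω p := by
  linarith [two_mul_Omeg_le_s0_sq hω hp]

theorem sq_sub_s0_sq_pos {s : ℝ} (hs : s0 ω < s) : 0 < s ^ 2 - s0 ω ^ 2 :=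
  sub_pos.2 (pow_lt_pow_left₀ hs (Real.sqrt_nonneg _) two_ne_zero)

theorem sq_sub_two_mul_Omeg_pos (hω : Continuous ω) {s p : ℝ} (hs : s0 ω < s)
    (hp : p ∈ Icc (0:ℝ) 1) : 0 < s ^ 2 - 2 * Omeg ω p :=
  (sq_sub_s0_sq_pos hs).trans_le (sq_sub_s0_sq_le hω s hp)

theorem Hp_pos (hω : Continuous ω) {s p : ℝ} (hs : s0 ω < s) (hp : p ∈ Icc (0:ℝ) 1) :
    0 < Hp ω p s :=
  inv_pos.2 (Real.sqrt_pos.2 (sq_sub_two_mul_Omeg_pos hω hs hp))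

theorem continuousOn_Hp (hω : Continuous ω) {s : ℝ} (hs : s0 ω < s) :
    ContinuousOn (Hp ω · s) (Icc 0 1) := fun _ hp =>
  ((Real.continuous_sqrt.comp (continuous_const.sub
    (continuous_const.mul (continuous_Omeg hω)))).continuousAt.inv₀
      (Real.sqrt_pos.2 (sq_sub_two_mul_Omeg_pos hω hs hp)).ne').continuousWithinAt

theorem intervalIntegrable_Hp (hω : Continuous ω) {s : ℝ} (hs : s0 ω < s) :
    IntervalIntegrable (Hp ω · s) volume 0 1 :=
  (continuousOn_Hp hω hs).intervalIntegrable_of_Icc zero_le_one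

theorem Hp_lt_Hp (hω : Continuous ω) {s t p : ℝ} (hs : s0 ω < s) (hst : s < t)
    (hp : p ∈ Icc (0:ℝ) 1) : Hp ω p t < Hp ω p s := by
  have hX := sq_sub_two_mul_Omeg_pos hω hs hp
  have hsq : s ^ 2 < t ^ 2 :=
    pow_lt_pow_left₀ hst ((Real.sqrt_nonneg _).trans hs.le) two_ne_zero
  exact inv_strictAnti₀ (Real.sqrt_pos.2 hX) (Real.sqrt_lt_sqrt hX.le (by linarith))

theorem continuousOn_Hfun (hω : Continuous ω) {s : ℝ} (hs : s0 ω < s) :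
    ContinuousOn (Hfun ω · s) (Icc 0 1) := by
  have := intervalIntegral.continuousOn_primitive_interval' (intervalIntegrable_Hp hω hs)
    left_mem_uIcc
  rwa [uIcc_of_le zero_le_one] at this

theorem Hfun_hasDerivAt (hω : Continuous ω) {s p : ℝ} (hs : s0 ω < s) (hp : p ∈ Ioo (0:ℝ) 1) :
    HasDerivAt (Hfun ω · s) (Hp ω p s) p :=
  intervalIntegral.integral_hasDerivAt_right
    ((intervalIntegrable_Hp hω hs).mono_set (by
      rw [uIcc_of_le zero_le_one, uIcc_of_le hp.1.le]; exact Icc_subset_Icc_right hp.2.le))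
    (((continuousOn_Hp hω hs).mono Ioo_subset_Icc_self).stronglyMeasurableAtFilter isOpen_Ioo
      p hp)
    ((continuousOn_Hp hω hs).continuousAt (Icc_mem_nhds hp.1 hp.2))

theorem integral_Hfun_mul_Hp (hω : Continuous ω) {s : ℝ} (hs : s0 ω < s) :
    ∫ p in (0:ℝ)..1, Hfun ω p s * Hp ω p s = dd ω s ^ 2 / 2 := by
  rw [intervalIntegral.integral_eq_sub_of_hasDerivAt_of_le (f := fun p => Hfun ω p s ^ 2 / 2)
    (f' := fun p => Hfun ω p s * Hp ω p s)
    zero_le_one (((continuousOn_Hfun hω hs).pow 2).div_const 2)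
    (fun p hp => (((Hfun_hasDerivAt hω hs hp).pow 2).div_const 2).congr_deriv (by ring))
    (((continuousOn_Hfun hω hs).mul (continuousOn_Hp hω hs)).intervalIntegrable_of_Icc
      zero_le_one)]
  simp [Hfun, dd]

theorem sigmaFun_eq (hω : Continuous ω) {s : ℝ} (hs : s0 ω < s) (r : ℝ) :
    sigmaFun ω s r = Afun ω s - dd ω s ^ 2 / 2 + (Omeg ω 1 + r - s ^ 2 / 2) * dd ω s := by
  have hintegrand : ∀ p ∈ uIcc (0:ℝ) 1,
      (1 / (2 * Hp ω p s ^ 2) - Hfun ω p s - Omeg ω p + Omeg ω 1 + r) * Hp ω p s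
        = Real.sqrt (s ^ 2 - 2 * Omeg ω p) - Hfun ω p s * Hp ω p s
          + (Omeg ω 1 + r - s ^ 2 / 2) * Hp ω p s := by
    intro p hp
    rw [uIcc_of_le zero_le_one] at hp
    have hX := sq_sub_two_mul_Omeg_pos hω hs hp
    have hHp_sq : 1 / (2 * Hp ω p s ^ 2) = (s ^ 2 - 2 * Omeg ω p) / 2 := by
      rw [Hp, inv_pow, Real.sq_sqrt hX.le]; field_simp
    have hX_mul_Hp : (s ^ 2 - 2 * Omeg ω p) * Hp ω p s = Real.sqrt (s ^ 2 - 2 * Omeg ω p) := by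
      rw [Hp]; field_simp; exact (Real.sq_sqrt hX.le).symm
    rw [hHp_sq]
    linear_combination hX_mul_Hp
  have hsqrt_int : IntervalIntegrable (fun p => Real.sqrt (s ^ 2 - 2 * Omeg ω p)) volume 0 1 :=
    (Real.continuous_sqrt.comp (continuous_const.sub
      (continuous_const.mul (continuous_Omeg hω)))).intervalIntegrable _ _
  have hHHp_int : IntervalIntegrable (fun p => Hfun ω p s * Hp ω p s) volume 0 1 :=
    ((continuousOn_Hfun hω hs).mul (continuousOn_Hp hω hs)).intervalIntegrable_of_Icc
      zero_le_one
  rw [sigmaFun, intervalIntegral.integral_congr hintegrand,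
    intervalIntegral.integral_add (hsqrt_int.sub hHHp_int)
      ((intervalIntegrable_Hp hω hs).const_mul _),
    intervalIntegral.integral_sub hsqrt_int hHHp_int, integral_Hfun_mul_Hp hω hs,
    intervalIntegral.integral_const_mul]
  rfl

theorem Afun_hasDerivAt (hω : Continuous ω) {s : ℝ} (hs : s0 ω < s) :
    HasDerivAt (Afun ω) (s * dd ω s) s := by
  have hsqrt : ∀ y ∈ Ioi (0:ℝ), HasDerivAt Real.sqrt ((Real.sqrt y)⁻¹ / 2) y := fun y hy =>
    (Real.hasDerivAt_sqrt hy.ne').congr_deriv (by field_simp)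
  have hsqrt' : ContinuousOn (fun y => (Real.sqrt y)⁻¹ / 2) (Ioi 0) :=
    (Real.continuous_sqrt.continuousOn.inv₀ fun y hy => (Real.sqrt_pos.2 hy).ne').div_const 2
  have hG := hasDerivAt_intervalIntegral_comp_sub zero_le_one hsqrt hsqrt'
    (c := fun p => 2 * Omeg ω p) (continuous_const.mul (continuous_Omeg hω))
    (fun p hp => sub_pos.1 (sq_sub_two_mul_Omeg_pos hω hs hp))
  refine (hG.comp s (h := fun x => x ^ 2) (hasDerivAt_pow 2 s)).congr_deriv ?_
  rw [intervalIntegral.integral_div]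
  simp only [dd, Hfun, Hp]
  ring

theorem dd_hasDerivAt (hω : Continuous ω) {s : ℝ} (hs : s0 ω < s) :
    HasDerivAt (dd ω) (-(s * Ifun ω s)) s := by
  have hinvsqrt : ∀ y ∈ Ioi (0:ℝ),
      HasDerivAt (fun y => (Real.sqrt y)⁻¹) (-((Real.sqrt y)⁻¹ ^ 3 / 2)) y := fun y hy =>
    ((Real.hasDerivAt_sqrt hy.ne').inv (Real.sqrt_pos.2 hy).ne').congr_deriv (by field_simp)
  have hinvsqrt' : ContinuousOn (fun y => -((Real.sqrt y)⁻¹ ^ 3 / 2)) (Ioi 0) :=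
    (((Real.continuous_sqrt.continuousOn.inv₀ fun y hy =>
      (Real.sqrt_pos.2 hy).ne').pow 3).div_const 2).neg
  have hG := hasDerivAt_intervalIntegral_comp_sub zero_le_one hinvsqrt hinvsqrt'
    (c := fun p => 2 * Omeg ω p) (continuous_const.mul (continuous_Omeg hω))
    (fun p hp => sub_pos.1 (sq_sub_two_mul_Omeg_pos hω hs hp))
  refine (hG.comp s (h := fun x => x ^ 2) (hasDerivAt_pow 2 s)).congr_deriv ?_
  rw [intervalIntegral.integral_neg, intervalIntegral.integral_div]
  simp only [Ifun, Hp]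
  ring

theorem RR_hasDerivAt (hω : Continuous ω) {s : ℝ} (hs : s0 ω < s) :
    HasDerivAt (RR ω) (s * (1 - Ifun ω s)) s :=
  ((((hasDerivAt_pow 2 s).div_const 2).sub_const (Omeg ω 1)).add
    (dd_hasDerivAt hω hs)).congr_deriv (by ring)

theorem sigmaFun_hasDerivAt (hω : Continuous ω) (r : ℝ) {s : ℝ} (hs : s0 ω < s) :
    HasDerivAt (sigmaFun ω · r) (s * Ifun ω s * (RR ω s - r)) s := by
  have hd := dd_hasDerivAt hω hs
  have hclosed := ((Afun_hasDerivAt hω hs).sub ((hd.pow 2).div_const 2)).add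
    (((hasDerivAt_const s (Omeg ω 1 + r)).sub ((hasDerivAt_pow 2 s).div_const 2)).mul hd)
  refine (hclosed.congr_deriv ?_).congr_of_eventuallyEq ?_
  · simp only [RR, Pi.sub_apply]; ring
  · filter_upwards [isOpen_Ioi.mem_nhds hs] with x hx
    exact sigmaFun_eq hω hx r

theorem dd_pos (hω : Continuous ω) {s : ℝ} (hs : s0 ω < s) : 0 < dd ω s :=
  intervalIntegral.integral_pos zero_lt_one (continuousOn_Hp hω hs)
    (fun _ hp => (Hp_pos hω hs (Ioc_subset_Icc_self hp)).le)
    ⟨0, left_mem_Icc.2 zero_le_one, Hp_pos hω hs (left_mem_Icc.2 zero_le_one)⟩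

theorem Ifun_pos (hω : Continuous ω) {s : ℝ} (hs : s0 ω < s) : 0 < Ifun ω s :=
  intervalIntegral.integral_pos zero_lt_one ((continuousOn_Hp hω hs).pow 3)
    (fun _ hp => (pow_pos (Hp_pos hω hs (Ioc_subset_Icc_self hp)) 3).le)
    ⟨0, left_mem_Icc.2 zero_le_one, pow_pos (Hp_pos hω hs (left_mem_Icc.2 zero_le_one)) 3⟩

theorem Ifun_strictAntiOn (hω : Continuous ω) : StrictAntiOn (Ifun ω) (Ioi (s0 ω)) := by
  intro s hs t ht hst
  have hcube : ∀ p ∈ Icc (0:ℝ) 1, Hp ω p t ^ 3 < Hp ω p s ^ 3 := fun p hp =>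
    pow_lt_pow_left₀ (Hp_lt_Hp hω hs hst hp) (Hp_pos hω ht hp).le three_ne_zero
  exact intervalIntegral.integral_lt_integral_of_continuousOn_of_le_of_exists_lt zero_lt_one
    ((continuousOn_Hp hω ht).pow 3) ((continuousOn_Hp hω hs).pow 3)
    (fun p hp => (hcube p (Ioc_subset_Icc_self hp)).le)
    ⟨0, left_mem_Icc.2 zero_le_one, hcube 0 (left_mem_Icc.2 zero_le_one)⟩

theorem RR_strictAntiOn_Ioc (hω : Continuous ω) {sc : ℝ} (hIsc : Ifun ω sc = 1) :
    StrictAntiOn (RR ω) (Ioc (s0 ω) sc) := by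
  refine strictAntiOn_of_deriv_neg (convex_Ioc _ _)
    (fun s hs => (RR_hasDerivAt hω hs.1).continuousAt.continuousWithinAt) fun s hs => ?_
  rw [interior_Ioc] at hs
  rw [(RR_hasDerivAt hω hs.1).deriv]
  have hI : 1 < Ifun ω s := hIsc ▸ Ifun_strictAntiOn hω hs.1 (hs.1.trans hs.2) hs.2
  exact mul_neg_of_pos_of_neg ((Real.sqrt_nonneg _).trans_lt hs.1) (by linarith)

theorem RR_strictMonoOn_Ici (hω : Continuous ω) {sc : ℝ} (hsc : s0 ω < sc)
    (hIsc : Ifun ω sc = 1) : StrictMonoOn (RR ω) (Ici sc) := by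
  refine strictMonoOn_of_deriv_pos (convex_Ici _)
    (fun s hs => (RR_hasDerivAt hω (hsc.trans_le hs)).continuousAt.continuousWithinAt)
    fun s hs => ?_
  rw [interior_Ici] at hs
  rw [(RR_hasDerivAt hω (hsc.trans hs)).deriv]
  have hI : Ifun ω s < 1 := hIsc ▸ Ifun_strictAntiOn hω hsc (hsc.trans hs) hs
  exact mul_pos ((Real.sqrt_nonneg _).trans_lt (hsc.trans hs)) (by linarith)

theorem sigmaFun_strictAntiOn (hω : Continuous ω) {r : ℝ} {D : Set ℝ} (hD : Convex ℝ D)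
    (hD₀ : D ⊆ Ioi (s0 ω)) (hR : ∀ s ∈ interior D, RR ω s < r) :
    StrictAntiOn (sigmaFun ω · r) D := by
  refine strictAntiOn_of_deriv_neg hD
    (fun s hs => (sigmaFun_hasDerivAt hω r (hD₀ hs)).continuousAt.continuousWithinAt)
    fun s hs => ?_
  have hs₀ : s0 ω < s := hD₀ (interior_subset hs)
  rw [(sigmaFun_hasDerivAt hω r hs₀).deriv]
  exact mul_neg_of_pos_of_neg (mul_pos ((Real.sqrt_nonneg _).trans_lt hs₀) (Ifun_pos hω hs₀))
    (sub_neg.2 (hR s hs))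

theorem sigmaFun_strictMonoOn (hω : Continuous ω) {r : ℝ} {D : Set ℝ} (hD : Convex ℝ D)
    (hD₀ : D ⊆ Ioi (s0 ω)) (hR : ∀ s ∈ interior D, r < RR ω s) :
    StrictMonoOn (sigmaFun ω · r) D := by
  refine strictMonoOn_of_deriv_pos hD
    (fun s hs => (sigmaFun_hasDerivAt hω r (hD₀ hs)).continuousAt.continuousWithinAt)
    fun s hs => ?_
  have hs₀ : s0 ω < s := hD₀ (interior_subset hs)
  rw [(sigmaFun_hasDerivAt hω r hs₀).deriv]
  exact mul_pos (mul_pos ((Real.sqrt_nonneg _).trans_lt hs₀) (Ifun_pos hω hs₀))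
    (sub_pos.2 (hR s hs))

theorem sqrt_sq_sub_s0_sq_le_Afun (hω : Continuous ω) (s : ℝ) :
    Real.sqrt (s ^ 2 - s0 ω ^ 2) ≤ Afun ω s := by
  simpa [Afun] using intervalIntegral.integral_mono_on zero_le_one
    (intervalIntegrable_const (μ := volume))
    ((Real.continuous_sqrt.comp (continuous_const.sub
      (continuous_const.mul (continuous_Omeg hω)))).intervalIntegrable _ _)
    fun p hp => Real.sqrt_le_sqrt (sq_sub_s0_sq_le hω s hp)

theorem dd_le_inv_sqrt_sq_sub_s0_sq (hω : Continuous ω) {s : ℝ} (hs : s0 ω < s) :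
    dd ω s ≤ (Real.sqrt (s ^ 2 - s0 ω ^ 2))⁻¹ := by
  simpa [dd, Hfun] using intervalIntegral.integral_mono_on zero_le_one (intervalIntegrable_Hp hω hs)
    intervalIntegrable_const fun p hp => inv_anti₀ (Real.sqrt_pos.2 (sq_sub_s0_sq_pos hs))
      (Real.sqrt_le_sqrt (sq_sub_s0_sq_le hω s hp))

theorem le_sigmaFun (hω : Continuous ω) (r : ℝ) {s : ℝ} (hs : s0 ω < s)
    (ht : 1 ≤ Real.sqrt (s ^ 2 - s0 ω ^ 2)) :
    Real.sqrt (s ^ 2 - s0 ω ^ 2) / 2 - (|Omeg ω 1 + r| + s0 ω ^ 2 / 2 + 1 / 2)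
      ≤ sigmaFun ω s r := by
  set t := Real.sqrt (s ^ 2 - s0 ω ^ 2)
  have hts : s ^ 2 = t ^ 2 + s0 ω ^ 2 := by
    rw [Real.sq_sqrt (sq_sub_s0_sq_pos hs).le]; ring
  have hd₀ := (dd_pos hω hs).le
  have htd : t * dd ω s ≤ 1 := calc
    t * dd ω s ≤ t * t⁻¹ :=
      mul_le_mul_of_nonneg_left (dd_le_inv_sqrt_sq_sub_s0_sq hω hs) (zero_le_one.trans ht)
    _ = 1 := mul_inv_cancel₀ (zero_lt_one.trans_le ht).ne'
  have hd₁ : dd ω s ≤ 1 := by nlinarith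
  have hcoef : -|Omeg ω 1 + r| ≤ (Omeg ω 1 + r) * dd ω s := by
    nlinarith [neg_abs_le (Omeg ω 1 + r), abs_nonneg (Omeg ω 1 + r)]
  have hquad : s ^ 2 / 2 * dd ω s ≤ t / 2 + s0 ω ^ 2 / 2 := by
    rw [hts]
    nlinarith [mul_le_mul_of_nonneg_left hd₁ (sq_nonneg (s0 ω))]
  have hexpand : (Omeg ω 1 + r - s ^ 2 / 2) * dd ω s
      = (Omeg ω 1 + r) * dd ω s - s ^ 2 / 2 * dd ω s := by ring
  rw [sigmaFun_eq hω hs r, hexpand]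
  nlinarith [sqrt_sq_sub_s0_sq_le_Afun hω s]

theorem tendsto_sigmaFun_atTop (hω : Continuous ω) (r : ℝ) :
    Tendsto (sigmaFun ω · r) atTop atTop := by
  have ht : Tendsto (fun s => Real.sqrt (s ^ 2 - s0 ω ^ 2)) atTop atTop :=
    Real.tendsto_sqrt_atTop.comp
      (tendsto_atTop_add_const_right _ _ (tendsto_pow_atTop two_ne_zero))
  refine tendsto_atTop_mono' _ ?_ (tendsto_atTop_add_const_right _
    (-(|Omeg ω 1 + r| + s0 ω ^ 2 / 2 + 1 / 2)) (ht.atTop_div_const two_pos))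
  filter_upwards [eventually_gt_atTop (s0 ω), ht.eventually_ge_atTop 1] with s hs ht₁
  exact le_sigmaFun hω r hs ht₁

end Profile

theorem stmt8_general (ω : ℝ → ℝ) (hω : Continuous ω)
    (sc : ℝ) (hsc : sc ∈ Ioi (s0 ω))
    (hI : (∫ p in (0:ℝ)..1, (Hp ω p sc) ^ 3) = 1)
    (R0 : ℝ) (hR0 : Tendsto (RR ω) (nhdsWithin (s0 ω) (Ioi (s0 ω))) (nhds R0))
    (r : ℝ) (hr : R0 ≤ r)
    (sp : ℝ) (hsp : sp ∈ Ioi sc) (hRsp : RR ω sp = r) :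
    StrictAntiOn (fun s => sigmaFun ω s r) (Ioo (s0 ω) sp) ∧
    StrictMonoOn (fun s => sigmaFun ω s r) (Ioi sp) ∧
    Tendsto (fun s => sigmaFun ω s r) atTop atTop := by
  have hsc_sp : sc < sp := hsp
  have hRanti := RR_strictAntiOn_Ioc hω hI
  have hRmono := RR_strictMonoOn_Ici hω hsc hI
  have hbelow : ∀ s ∈ Ioo (s0 ω) sp, RR ω s < r := by
    intro s hs
    rcases le_or_gt s sc with hs_sc | hsc_s
    · exact (hRanti.lt_of_tendsto_nhdsGT hR0 ⟨hs.1, hs_sc⟩).trans_le hr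
    · exact hRsp ▸ hRmono hsc_s.le hsc_sp.le hs.2
  have habove : ∀ s ∈ Ioi sp, r < RR ω s := fun s hs =>
    hRsp ▸ hRmono hsc_sp.le (hsc_sp.trans hs).le hs
  refine ⟨sigmaFun_strictAntiOn hω (convex_Ioo _ _) Ioo_subset_Ioi_self ?_,
    sigmaFun_strictMonoOn hω (convex_Ioi _) (Ioi_subset_Ioi (hsc.trans hsc_sp).le) ?_,
    tendsto_sigmaFun_atTop hω r⟩
  · simpa only [interior_Ioo] using hbelow
  · simpa only [interior_Ioi] using habove

/-- with `s_c` critical, `R₀ = lim_{s→s₀+} R(s)` finite, `r ≥ R₀` and `s₊(r)`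
the unique solution of `R(s) = r` in `(s_c, ∞)`, the function `s ↦ σ(s;r)` is strictly
decreasing on `(s₀, s₊(r))`, strictly increasing on `(s₊(r), ∞)`, and `σ(s;r) → +∞` as
`s → ∞`. -/
theorem stmt8 (ω : ℝ → ℝ) (hω : Continuous ω)
    (sc : ℝ) (hsc : sc ∈ Ioi (s0 ω))
    (hI : (∫ p in (0:ℝ)..1, (Hp ω p sc) ^ 3) = 1)
    (R0 : ℝ) (hR0 : Tendsto (RR ω) (nhdsWithin (s0 ω) (Ioi (s0 ω))) (nhds R0))
    (r : ℝ) (hr : R0 ≤ r)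
    (sp : ℝ) (hsp : sp ∈ Ioi sc) (hRsp : RR ω sp = r)
    (huniq : ∀ s ∈ Ioi sc, RR ω s = r → s = sp) :
    StrictAntiOn (fun s => sigmaFun ω s r) (Ioo (s0 ω) sp) ∧
    StrictMonoOn (fun s => sigmaFun ω s r) (Ioi sp) ∧
    Tendsto (fun s => sigmaFun ω s r) atTop atTop :=
  stmt8_general ω hω sc hsc hI R0 hR0 r hr sp hsp hRsp
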